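/- The set S'_{p,q-1} = {g ∈ GL(n-2,F) : g_{n-2,j} = 0 for j ∈ {1,…,p−q+1} ∪ {p−q+3, p−q+5, …, p+q−3}} equals the product set P_{n-2}·H_{p-1,q-1}, where P_{n-2} is the mirabolic subgroup of GL(n-2,F) and H_{p-1,q-1} = w_{p-1,q-1} M_{(p-1,q-1)} w_{p-1,q-1}^{-1}. -/

import Mathlib

open scoped MatrixGroups

def sig0 (p q j : ℕ) : ℕ :=
  if j ≤ p - q ∨ j = p + q - 1 then j
  else if j ≤ p - 1 then 2 * j - (p - q)
  else 2 * j + 1 - (p + q)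

def wMat (F : Type*) [Field F] (p q m : ℕ) : Matrix (Fin m) (Fin m) F :=
  Matrix.of fun i j => if (i : ℕ) = sig0 p q (j : ℕ) then 1 else 0

/-!
The permutation matrix `w = wMat …` fixes the last basis vector, so it lies in the mirabolic
subgroup `P`, and `g ∈ P · w M w⁻¹` iff `g w ∈ P · M` for the block-diagonal Levi `M`. The last
row of `g w` is the last row of `g` read through the permutation `σ` of `w`, and `g w ∈ P · M` iff
this row vanishes on the first block: the last row of `a m` with `a ∈ P` is that of `m`, and
conversely every nonzero row supported on the second block is the last row of an invertible
block-diagonal `m`, so that `g w m⁻¹ ∈ P`. Finally `σ` maps the first block `{0, …, p - 2}` onto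
the columns defining `S'_{p,q-1}`.
-/

namespace Matrix

variable {ι R : Type*}

lemma permMatrix_inv_row_of_apply_eq_self [DecidableEq ι] [Zero R] [One R] {σ : Equiv.Perm ι}
    {i : ι} (hσ : σ i = i) : (σ⁻¹).permMatrix R i = Pi.single i 1 := by
  rw [Equiv.Perm.permMatrix, PEquiv.toMatrix_toPEquiv_apply, Equiv.Perm.inv_eq_iff_eq.2 hσ.symm]

variable [Fintype ι]

lemma mul_row_congr [NonUnitalNonAssocSemiring R] {A B : Matrix ι ι R} {i : ι} (h : A i = B i)
    (C : Matrix ι ι R) : (A * C) i = (B * C) i := by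
  ext j
  simp only [mul_apply, h]

variable [DecidableEq ι]

lemma mul_row_of_row_eq_single [NonAssocSemiring R] {A : Matrix ι ι R} {i : ι}
    (h : A i = Pi.single i 1) (C : Matrix ι ι R) : (A * C) i = C i := by
  ext j
  simp [mul_apply, h, Pi.single_apply]

lemma mul_permMatrix_inv_apply [NonAssocSemiring R] (A : Matrix ι ι R) (σ : Equiv.Perm ι)
    (i j : ι) : (A * (σ⁻¹).permMatrix R) i j = A i (σ j) := by
  rw [Equiv.Perm.permMatrix, PEquiv.mul_toMatrix_toPEquiv]
  rfl

lemma det_one_updateRow [CommRing R] (i : ι) (v : ι → R) : (updateRow 1 i v).det = v i := by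
  rw [← cramer_transpose_apply, transpose_one, cramer_one]
  rfl

lemma row_ne_zero_of_isUnit [CommRing R] [Nontrivial R] {A : Matrix ι ι R} (hA : IsUnit A)
    (i : ι) : A i ≠ 0 := fun h =>
  ((isUnit_iff_isUnit_det A).1 hA).ne_zero (det_eq_zero_of_row_eq_zero i (congrFun h))

lemma exists_isUnit_blockDiagonal_row_eq [Field R] (S : ι → Prop) {i : ι} {v : ι → R}
    (hv : v ≠ 0) (hsupp : ∀ j, S j ≠ S i → v j = 0) :
    ∃ m : Matrix ι ι R, IsUnit m ∧ (∀ a b, S a ≠ S b → m a b = 0) ∧ m i = v := by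
  obtain ⟨j₀, hj₀⟩ := Function.ne_iff.1 hv
  have hS : S j₀ = S i := by_contra fun h => hj₀ (hsupp j₀ h)
  -- moving column `j₀` to position `i` makes `updateRow 1 i` invertible
  set τ := Equiv.swap j₀ i
  have hτS : ∀ j, S (τ j) = S j := fun j => by
    rcases eq_or_ne j j₀ with rfl | h₀
    · rw [Equiv.swap_apply_left, hS]
    rcases eq_or_ne j i with rfl | h₁
    · rw [Equiv.swap_apply_right, hS]
    · rw [Equiv.swap_apply_of_ne_of_ne h₀ h₁]
  refine ⟨(updateRow 1 i (v ∘ τ)).submatrix id τ, ?_, fun a b hab => ?_, ?_⟩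
  · rw [isUnit_iff_isUnit_det, det_permute', det_one_updateRow]
    refine ((Equiv.Perm.sign τ).isUnit.map (Int.castRingHom R)).mul (isUnit_iff_ne_zero.2 ?_)
    simpa [τ] using hj₀
  · rcases eq_or_ne a i with rfl | ha
    · simpa [τ] using hsupp b (Ne.symm hab)
    · simp only [submatrix_apply, id_eq, updateRow_apply, if_neg ha]
      refine one_apply_ne ?_
      rintro rfl
      exact hab (hτS b)
  · ext j
    simp [τ]

end Matrix

section Mirabolic

variable {ι F : Type*} [Fintype ι] [DecidableEq ι] [Field F]

def mirabolic (F : Type*) [Field F] (L : ι) : Subgroup (GL ι F) where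
  carrier := {a | (a : Matrix ι ι F) L = Pi.single L 1}
  mul_mem' {a b} ha hb := by
    rw [Set.mem_ofPred_eq, Units.val_mul, Matrix.mul_row_of_row_eq_single ha, hb]
  one_mem' := funext fun _ => Matrix.one_eq_pi_single
  inv_mem' {a} ha := by
    rw [Set.mem_ofPred_eq, ← Matrix.mul_row_of_row_eq_single ha (a⁻¹).val, ← Units.val_mul,
      mul_inv_cancel, Units.val_one]
    exact funext fun _ => Matrix.one_eq_pi_single

lemma mem_mirabolic_iff {L : ι} {a : GL ι F} :
    a ∈ mirabolic F L ↔ ∀ j, (a : Matrix ι ι F) L j = if j = L then 1 else 0 := by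
  simp only [mirabolic, Subgroup.mem_mk, Submonoid.mem_mk, Subsemigroup.mem_mk, Set.mem_ofPred_eq,
    funext_iff, Pi.single_apply]

theorem row_apply_perm_eq_zero_iff_exists_mirabolic_mul {S : ι → Prop} {L : ι} (hL : ¬S L)
    {σ : Equiv.Perm ι} (hσ : σ L = L) (g : GL ι F) :
    (∀ i, S i → (g : Matrix ι ι F) L (σ i) = 0) ↔
      ∃ a b : GL ι F, a ∈ mirabolic F L ∧
        (∃ h : Matrix ι ι F, IsUnit h ∧ (∀ i j, S i ≠ S j → h i j = 0) ∧
          (b : Matrix ι ι F) * (σ⁻¹).permMatrix F = (σ⁻¹).permMatrix F * h) ∧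
        g = a * b := by
  set W : GL ι F := (Matrix.permMatrixHom (R := F)).toHomUnits σ
  have hWval : (W : Matrix ι ι F) = (σ⁻¹).permMatrix F := rfl
  have hW : W ∈ mirabolic F L := Matrix.permMatrix_inv_row_of_apply_eq_self hσ
  constructor
  · intro hg
    obtain ⟨m, hm, hblock, hrow⟩ := Matrix.exists_isUnit_blockDiagonal_row_eq S (i := L)
      (Matrix.row_ne_zero_of_isUnit (g * W).isUnit L) fun j hj => by
        rw [Units.val_mul, hWval, Matrix.mul_permMatrix_inv_apply]
        exact hg j (by simpa [hL] using hj)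
    set M := hm.unit
    have hgWM : g * W * M⁻¹ ∈ mirabolic F L := by
      change ((g * W * M⁻¹ : GL ι F) : Matrix ι ι F) L = _
      rw [Units.val_mul, ← Matrix.mul_row_congr (hm.unit_spec ▸ hrow), ← Units.val_mul,
        mul_inv_cancel, Units.val_one]
      exact funext fun _ => Matrix.one_eq_pi_single
    refine ⟨g * W * M⁻¹ * W⁻¹, W * M * W⁻¹, mul_mem hgWM (inv_mem hW), ⟨m, hm, hblock, ?_⟩,
      by group⟩
    have hconj : W * M * W⁻¹ * W = W * M := by group
    rw [← hWval, ← Units.val_mul, hconj, Units.val_mul, hm.unit_spec]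
  · rintro ⟨a, b, ha, ⟨h, -, hblock, hbw⟩, rfl⟩ i hi
    calc ((a * b : GL ι F) : Matrix ι ι F) L (σ i)
        = ((a : Matrix ι ι F) * ((b : Matrix ι ι F) * (σ⁻¹).permMatrix F)) L i := by
          rw [← Matrix.mul_assoc, Matrix.mul_permMatrix_inv_apply, Units.val_mul]
      _ = h L i := by
          rw [hbw, Matrix.mul_row_of_row_eq_single ha,
            Matrix.mul_row_of_row_eq_single (Matrix.permMatrix_inv_row_of_apply_eq_self hσ)]
      _ = 0 := hblock L i fun e => hL (e ▸ hi)

end Mirabolic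

lemma sig0_lt {P Q j : ℕ} (hj : j < P + Q) : sig0 P Q j < P + Q := by
  unfold sig0; split_ifs <;> omega

lemma sig0_inj_of_lt {P Q i j : ℕ} (hQP : Q ≤ P) (hi : i < P + Q) (hj : j < P + Q)
    (h : sig0 P Q i = sig0 P Q j) : i = j := by
  unfold sig0 at h; split_ifs at h <;> omega

lemma exists_perm_val_eq_sig0 {P Q m : ℕ} (hQP : Q ≤ P) (hm : m = P + Q) :
    ∃ σ : Equiv.Perm (Fin m), ∀ j, (σ j : ℕ) = sig0 P Q j := by
  subst hm
  let f (j : Fin (P + Q)) : Fin (P + Q) := ⟨sig0 P Q j, sig0_lt j.isLt⟩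
  have hf : Function.Injective f := fun i j h =>
    Fin.ext (sig0_inj_of_lt hQP i.isLt j.isLt (Fin.val_eq_of_eq h))
  exact ⟨Equiv.ofBijective f (Finite.injective_iff_bijective.1 hf), fun _ => rfl⟩

lemma wMat_eq_permMatrix_inv (F : Type*) [Field F] {P Q m : ℕ} {σ : Equiv.Perm (Fin m)}
    (hσ : ∀ j, (σ j : ℕ) = sig0 P Q j) : wMat F P Q m = (σ⁻¹).permMatrix F := by
  ext i j
  simp [wMat, PEquiv.toMatrix_apply, Equiv.symm_apply_eq, Fin.ext_iff, hσ]

lemma sig0_mem_vanishing_columns_iff (p q i : ℕ) (hq : 2 ≤ q) (hqp : q ≤ p) :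
    (sig0 (p - 1) (q - 1) i + 1 ≤ p - q + 1 ∨
      ∃ c, 1 ≤ c ∧ c ≤ q - 2 ∧ sig0 (p - 1) (q - 1) i + 1 = p - q + 1 + 2 * c) ↔ i < p - 1 := by
  unfold sig0
  constructor
  · intro h
    split_ifs at h <;> rcases h with h | ⟨c, h1, h2, h3⟩ <;> omega
  · intro h
    split_ifs with h1 h2
    · left; omega
    · right; exact ⟨i - (p - q), by omega, by omega, by omega⟩
    · omega

/-- With `p ≥ q ≥ 2` and `n = p+q = k+3` (so `GL(n-2,F) = GL(Fin (k+1), F)`):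
`S'_{p,q-1} = {g ∈ GL(n-2,F) : g_{n-2,j} = 0 for (1-indexed)
j ∈ {1,…,p-q+1} ∪ {p-q+3, p-q+5, …, p+q-3}}` equals the product set
`P_{n-2}·H_{p-1,q-1}` with `H_{p-1,q-1} = w_{p-1,q-1} M_{(p-1,q-1)} w_{p-1,q-1}⁻¹`. -/
theorem stmt16 (F : Type*) [Field F] (p q k : ℕ) (hq : 2 ≤ q) (hqp : q ≤ p)
    (hn : k + 3 = p + q) :
    {g : GL (Fin (k + 1)) F |
      ∀ j : Fin (k + 1),
        ((j : ℕ) + 1 ≤ p - q + 1 ∨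
          ∃ c : ℕ, 1 ≤ c ∧ c ≤ q - 2 ∧ (j : ℕ) + 1 = p - q + 1 + 2 * c) →
        (g : Matrix (Fin (k + 1)) (Fin (k + 1)) F) (Fin.last k) j = 0} =
    {g : GL (Fin (k + 1)) F |
      ∃ a b : GL (Fin (k + 1)) F,
        (∀ j : Fin (k + 1), (a : Matrix (Fin (k + 1)) (Fin (k + 1)) F) (Fin.last k) j =
          if j = Fin.last k then 1 else 0) ∧
        (∃ h : Matrix (Fin (k + 1)) (Fin (k + 1)) F, IsUnit h ∧
          (∀ i j : Fin (k + 1), (((i : ℕ) < p - 1) ≠ ((j : ℕ) < p - 1)) → h i j = 0) ∧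
          (b : Matrix (Fin (k + 1)) (Fin (k + 1)) F) * wMat F (p - 1) (q - 1) (k + 1) =
            wMat F (p - 1) (q - 1) (k + 1) * h) ∧
        g = a * b} := by
  obtain ⟨σ, hσ⟩ := exists_perm_val_eq_sig0 (P := p - 1) (Q := q - 1) (m := k + 1)
    (by omega) (by omega)
  have hσL : σ (Fin.last k) = Fin.last k := Fin.ext <| by
    rw [hσ, Fin.val_last, sig0, if_pos (Or.inr (by omega))]
  ext g
  rw [Set.mem_ofPred_eq, Set.mem_ofPred_eq, wMat_eq_permMatrix_inv F hσ]
  simp only [← mem_mirabolic_iff]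
  rw [← row_apply_perm_eq_zero_iff_exists_mirabolic_mul
    (S := fun i : Fin (k + 1) => (i : ℕ) < p - 1) (by simp only [Fin.val_last]; omega) hσL, ← σ.forall_congr_right]
  simp only [hσ, sig0_mem_vanishing_columns_iff p q _ hq hqp]
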